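/- arXiv:2405.03811 — 4 statements merged into one kernel-verified Lean document; each statement's English description precedes it below -/
import Mathlib

section
/- If (X, μ) is a probability space and (A_q)_{q∈ℕ} is a sequence of measurable subsets of X such that 0 < Σ_{q=1}^∞ μ(A_q) < ∞, then μ(⋃_{q=1}^∞ A_q) ≥ (Σ_{q=1}^∞ μ(A_q))² / Σ_{q,r=1}^∞ μ(A_q ∩ A_r). -/
/-!
Let `N = ∑ 𝟙_{A q}` count how many of the sets contain a point. Then `∫ N = ∑ μ(A q)`,
`∫ N² = ∑_{q,r} μ(A q ∩ A r)`, and `N` vanishes off `⋃ A q`, so Cauchy–Schwarz on `⋃ A q`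
gives `(∫ N)² ≤ μ(⋃ A q) · ∫ N²`.
-/

open MeasureTheory ENNReal Set Function

section Indicator

variable {α ι : Type*} {A : ι → Set α}

theorem tsum_indicator_one_sq (x : α) :
    (∑' i, (A i).indicator (1 : α → ℝ≥0∞) x) ^ 2 =
      ∑' p : ι × ι, (A p.1 ∩ A p.2).indicator 1 x := by
  rw [sq, ← ENNReal.tsum_mul_right, ENNReal.tsum_prod (f := fun i j ↦ (A i ∩ A j).indicator 1 x)]
  refine tsum_congr fun i ↦ ?_
  rw [← ENNReal.tsum_mul_left]
  simp only [inter_indicator_one, Pi.mul_apply]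

theorem support_tsum_indicator_one_subset :
    support (fun x ↦ ∑' i, (A i).indicator (1 : α → ℝ≥0∞) x) ⊆ ⋃ i, A i := by
  intro x hx
  obtain ⟨i, hi⟩ := not_forall.mp (mt ENNReal.tsum_eq_zero.mpr hx)
  exact mem_iUnion.mpr ⟨i, mem_of_indicator_ne_zero hi⟩

end Indicator

namespace MeasureTheory

variable {α : Type*} [MeasurableSpace α] {μ : Measure α}

theorem sq_lintegral_le_measure_univ_mul_lintegral_sq {f : α → ℝ≥0∞} (hf : AEMeasurable f μ) :
    (∫⁻ x, f x ∂μ) ^ 2 ≤ μ univ * ∫⁻ x, f x ^ 2 ∂μ := by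
  have holder := ENNReal.lintegral_mul_le_Lp_mul_Lq μ Real.HolderConjugate.two_two hf
    (aemeasurable_const (b := (1 : ℝ≥0∞)))
  simp only [Pi.mul_apply, mul_one, one_pow, one_mul, lintegral_const, rpow_two] at holder
  calc (∫⁻ x, f x ∂μ) ^ 2
      ≤ ((∫⁻ x, f x ^ 2 ∂μ) ^ (1 / 2 : ℝ) * μ univ ^ (1 / 2 : ℝ)) ^ 2 := by gcongr
    _ = μ univ * ∫⁻ x, f x ^ 2 ∂μ := by
      rw [mul_pow, ← rpow_natCast, ← rpow_natCast (_ ^ _), ← rpow_mul, ← rpow_mul]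
      norm_num [mul_comm]

theorem sq_lintegral_le_measure_mul_lintegral_sq {f : α → ℝ≥0∞} {s : Set α}
    (hf : AEMeasurable f μ) (hfs : support f ⊆ s) :
    (∫⁻ x, f x ∂μ) ^ 2 ≤ μ s * ∫⁻ x, f x ^ 2 ∂μ := by
  rw [← setLIntegral_eq_of_support_subset hfs]
  calc (∫⁻ x in s, f x ∂μ) ^ 2
      ≤ μ.restrict s univ * ∫⁻ x in s, f x ^ 2 ∂μ :=
        sq_lintegral_le_measure_univ_mul_lintegral_sq hf.restrict
    _ ≤ μ s * ∫⁻ x, f x ^ 2 ∂μ := by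
      rw [Measure.restrict_apply_univ]
      gcongr
      exact Measure.restrict_le_self

variable {ι : Type*} [Countable ι] {A : ι → Set α}

theorem lintegral_tsum_indicator_one (hA : ∀ i, MeasurableSet (A i)) :
    ∫⁻ x, ∑' i, (A i).indicator 1 x ∂μ = ∑' i, μ (A i) := by
  rw [lintegral_tsum fun i ↦ (measurable_one.indicator (hA i)).aemeasurable]
  simp_rw [lintegral_indicator_one (hA _)]

theorem sq_tsum_measure_le_measure_iUnion_mul_tsum_measure_inter
    (hA : ∀ i, MeasurableSet (A i)) :
    (∑' i, μ (A i)) ^ 2 ≤ μ (⋃ i, A i) * ∑' p : ι × ι, μ (A p.1 ∩ A p.2) := by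
  have hcount : Measurable fun x ↦ ∑' i, (A i).indicator (1 : α → ℝ≥0∞) x :=
    Measurable.tsum fun i ↦ measurable_one.indicator (hA i)
  have hsq := sq_lintegral_le_measure_mul_lintegral_sq hcount.aemeasurable
    support_tsum_indicator_one_subset (μ := μ)
  simp_rw [tsum_indicator_one_sq] at hsq
  rwa [lintegral_tsum_indicator_one hA,
    lintegral_tsum_indicator_one (A := fun p : ι × ι ↦ A p.1 ∩ A p.2)
      fun p ↦ (hA p.1).inter (hA p.2)] at hsq

end MeasureTheory

theorem chung_erdos_general {X : Type*} [MeasurableSpace X] (μ : Measure X)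
    (A : ℕ → Set X) (hA : ∀ q, MeasurableSet (A q)) :
    (∑' q : ℕ, μ (A q)) ^ 2 / (∑' p : ℕ × ℕ, μ (A p.1 ∩ A p.2)) ≤ μ (⋃ q : ℕ, A q) :=
  ENNReal.div_le_of_le_mul (sq_tsum_measure_le_measure_iUnion_mul_tsum_measure_inter hA)

/-- **Chung–Erdős lemma.** If `(X, μ)` is a probability space and `(A q)` a sequence of
measurable sets with `0 < ∑ μ(A q) < ∞`, then
`μ(⋃ A q) ≥ (∑ μ(A q))² / ∑_{q,r} μ(A q ∩ A r)`. -/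
theorem chung_erdos {X : Type*} [MeasurableSpace X] (μ : Measure X) [IsProbabilityMeasure μ]
    (A : ℕ → Set X) (hA : ∀ q, MeasurableSet (A q))
    (hpos : 0 < ∑' q : ℕ, μ (A q)) (hfin : ∑' q : ℕ, μ (A q) < ⊤) :
    (∑' q : ℕ, μ (A q)) ^ 2 / (∑' p : ℕ × ℕ, μ (A p.1 ∩ A p.2)) ≤ μ (⋃ q : ℕ, A q) :=
  chung_erdos_general μ A hA
end

section
/- Let (X, μ) be a probability space and (A_{d,q})_{d,q≥1} a doubly-indexed collection of measurable sets such that for every d ≥ 1, Σ_{q=1}^∞ μ(A_{d,q}) < ∞, while Σ_{d=1}^∞ Σ_{q=1}^∞ μ(A_{d,q}) = ∞. If there exists a constant C ≥ 0 such that for infinitely many D, Σ over pairs (k,q),(ℓ,r) with k,ℓ ≤ D of μ(A_{k,q} ∩ A_{ℓ,r}) ≤ C (Σ over pairs (d,q) with d ≤ D of μ(A_{d,q}))², then the limsup of the family (A_{d,q}) as d,q → ∞ has μ-measure at least 1/C. -/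
/-!
Write `T D` for the total mass of the first `D` rows. The union of the rows `N ≤ k < D` lies in
the tail `⋃ k ≥ N, ⋃ q, A k q`, so the Chung–Erdős inequality
`(∑ μ Bᵢ)² ≤ μ (⋃ Bᵢ) * ∑ μ (Bᵢ ∩ Bⱼ)` (Cauchy–Schwarz for `∑ 1_{Bᵢ}` against the indicator of
its support) bounds `(T D - T N)²` by the measure of the tail times the pair sum, hence by
`μ (tail) * C * T D²` for the good `D`. Since `T D → ∞` while `T N` is fixed, `μ (tail) * C ≥ 1`.
Continuity from above passes this bound to the limsup of the row unions, whose points lie in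
infinitely many `A d q`.
-/

open MeasureTheory Filter Set
open scoped ENNReal Topology

theorem ENNReal.one_le_of_frequently_tsub_sq_le_mul_sq {α : Type*} {l : Filter α}
    {T : α → ℝ≥0∞} {c K : ℝ≥0∞} (hT : Tendsto T l (𝓝 ∞)) (hT_ne_top : ∀ a, T a ≠ ∞)
    (hc : c ≠ ∞) (h : ∃ᶠ a in l, (T a - c) ^ 2 ≤ K * T a ^ 2) : 1 ≤ K := by
  by_contra! hK
  have hk : K.toReal < 1 := by simpa using (ENNReal.toReal_lt_toReal hK.ne_top one_ne_top).2 hK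
  set R := (2 * c.toReal + 1) / (1 - K.toReal)
  have hR : R * (1 - K.toReal) = 2 * c.toReal + 1 := div_mul_cancel₀ _ (sub_pos.2 hk).ne'
  have hR₀ : 0 < R := div_pos (by positivity) (sub_pos.2 hk)
  obtain ⟨a, ha, hRa⟩ :=
    (h.and_eventually (hT.eventually (lt_mem_nhds (ofReal_lt_top (r := R))))).exists
  have hRt : R < (T a).toReal := (ENNReal.ofReal_lt_iff_lt_toReal hR₀.le (hT_ne_top a)).1 hRa
  have hcT : c ≤ T a := (ENNReal.toReal_le_toReal hc (hT_ne_top a)).1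
    (by nlinarith [K.toReal_nonneg])
  have ha' := ENNReal.toReal_mono (mul_ne_top hK.ne_top (pow_ne_top (hT_ne_top a))) ha
  rw [toReal_pow, toReal_sub_of_le hcT (hT_ne_top a), toReal_mul, toReal_pow] at ha'
  -- `(t - c) ^ 2 ≤ k t ^ 2` forces `(1 - k) t ≤ 2 c`, which fails for `t > R`.
  nlinarith [mul_lt_mul_of_pos_right hRt (sub_pos.2 hk), c.toReal_nonneg]

section ChungErdos

variable {X : Type*} [MeasurableSpace X] {μ : Measure X}

theorem sq_lintegral_le_measure_mul_lintegral_sq {f : X → ℝ≥0∞} (hf : AEMeasurable f μ)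
    {s : Set X} (hs : MeasurableSet s) (hfs : ∀ x ∉ s, f x = 0) :
    (∫⁻ x, f x ∂μ) ^ 2 ≤ μ s * ∫⁻ x, f x ^ 2 ∂μ := by
  have hf_eq : ∀ x, f x = (f x ^ 2) ^ (1 / 2 : ℝ) * s.indicator 1 x ^ (1 / 2 : ℝ) := by
    intro x
    by_cases hx : x ∈ s
    · rw [indicator_of_mem hx, Pi.one_apply, ENNReal.one_rpow, mul_one, ← ENNReal.rpow_natCast,
        ← ENNReal.rpow_mul]
      norm_num
    · simp [hx, hfs x hx]
  have holder := ENNReal.lintegral_mul_norm_pow_le (hf.pow_const 2)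
    (aemeasurable_one.indicator hs : AEMeasurable (s.indicator 1) μ)
    (p := 1 / 2) (q := 1 / 2) (by norm_num) (by norm_num) (by norm_num)
  rw [← lintegral_congr hf_eq, lintegral_indicator_one hs] at holder
  calc (∫⁻ x, f x ∂μ) ^ 2
      ≤ ((∫⁻ x, f x ^ 2 ∂μ) ^ (1 / 2 : ℝ) * μ s ^ (1 / 2 : ℝ)) ^ 2 := by gcongr
    _ = μ s * ∫⁻ x, f x ^ 2 ∂μ := by
      rw [mul_pow, ← ENNReal.rpow_natCast, ← ENNReal.rpow_natCast, ← ENNReal.rpow_mul,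
        ← ENNReal.rpow_mul]
      norm_num [mul_comm]

theorem sq_tsum_measure_le_measure_iUnion_mul {ι : Type*} [Countable ι] {B : ι → Set X}
    (hB : ∀ i, MeasurableSet (B i)) :
    (∑' i, μ (B i)) ^ 2 ≤ μ (⋃ i, B i) * ∑' i, ∑' j, μ (B i ∩ B j) := by
  have hind : ∀ i, AEMeasurable ((B i).indicator (1 : X → ℝ≥0∞)) μ := fun i =>
    aemeasurable_one.indicator (hB i)
  have hsq : ∀ x, (∑' i, (B i).indicator (1 : X → ℝ≥0∞) x) ^ 2
      = ∑' i, ∑' j, (B i ∩ B j).indicator 1 x := by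
    intro x
    simp_rw [sq, ← ENNReal.tsum_mul_right, ← ENNReal.tsum_mul_left, inter_indicator_one,
      Pi.mul_apply]
  have hsq_int : ∫⁻ x, (∑' i, (B i).indicator (1 : X → ℝ≥0∞) x) ^ 2 ∂μ
      = ∑' i, ∑' j, μ (B i ∩ B j) := by
    have hind₂ : ∀ i j, AEMeasurable ((B i ∩ B j).indicator (1 : X → ℝ≥0∞)) μ := fun i j =>
      aemeasurable_one.indicator ((hB i).inter (hB j))
    simp_rw [hsq]
    rw [lintegral_tsum fun i => AEMeasurable.tsum (hind₂ i)]
    simp_rw [lintegral_tsum (hind₂ _), lintegral_indicator_one ((hB _).inter (hB _))]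
  have hvanish : ∀ x ∉ ⋃ i, B i, ∑' i, (B i).indicator (1 : X → ℝ≥0∞) x = 0 :=
    fun x hx => ENNReal.tsum_eq_zero.2 fun i =>
      indicator_of_notMem (fun hxi => hx (mem_iUnion_of_mem i hxi)) _
  have := sq_lintegral_le_measure_mul_lintegral_sq (AEMeasurable.tsum hind)
    (MeasurableSet.iUnion hB) hvanish
  rwa [hsq_int, lintegral_tsum hind, tsum_congr fun i => lintegral_indicator_one (hB i)] at this

theorem sq_sum_tsum_measure_le_measure_biUnion_mul {κ ι : Type*} [Countable ι] (s : Finset κ)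
    {A : κ → ι → Set X} (hA : ∀ k q, MeasurableSet (A k q)) :
    (∑ k ∈ s, ∑' q, μ (A k q)) ^ 2
      ≤ μ (⋃ k ∈ s, ⋃ q, A k q) * ∑ k ∈ s, ∑ l ∈ s, ∑' q, ∑' r, μ (A k q ∩ A l r) := by
  have hlin : ∑' p : s × ι, μ (A p.1 p.2) = ∑ k ∈ s, ∑' q, μ (A k q) := by
    rw [ENNReal.tsum_prod', Finset.tsum_subtype s fun k => ∑' q, μ (A k q)]
  have hquad : ∑' p : s × ι, ∑' p' : s × ι, μ (A p.1 p.2 ∩ A p'.1 p'.2)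
      = ∑ k ∈ s, ∑ l ∈ s, ∑' q, ∑' r, μ (A k q ∩ A l r) := by
    simp_rw [ENNReal.tsum_prod', ← Finset.tsum_subtype s]
    exact tsum_congr fun k => ENNReal.tsum_comm
  have hunion : ⋃ p : s × ι, A p.1 p.2 = ⋃ k ∈ s, ⋃ q, A k q := by
    ext x
    simp
  rw [← hlin, ← hquad, ← hunion]
  exact sq_tsum_measure_le_measure_iUnion_mul fun p => hA _ _

theorem sq_tsub_sum_range_le_measure_iUnion_ge_mul {ι : Type*} [Countable ι]
    {A : ℕ → ι → Set X} (hA : ∀ k q, MeasurableSet (A k q)) {N D : ℕ} (hND : N ≤ D) :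
    (∑ k ∈ Finset.range D, ∑' q, μ (A k q) - ∑ k ∈ Finset.range N, ∑' q, μ (A k q)) ^ 2
      ≤ μ (⋃ k ≥ N, ⋃ q, A k q) *
        ∑ k ∈ Finset.range D, ∑ l ∈ Finset.range D, ∑' q, ∑' r, μ (A k q ∩ A l r) := by
  calc _ ≤ (∑ k ∈ Finset.Ico N D, ∑' q, μ (A k q)) ^ 2 := by
        gcongr
        rw [← Finset.sum_range_add_sum_Ico _ hND]
        exact tsub_le_iff_left.2 le_rfl
    _ ≤ μ (⋃ k ∈ Finset.Ico N D, ⋃ q, A k q) *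
          ∑ k ∈ Finset.Ico N D, ∑ l ∈ Finset.Ico N D, ∑' q, ∑' r, μ (A k q ∩ A l r) :=
        sq_sum_tsum_measure_le_measure_biUnion_mul _ hA
    _ ≤ _ := by
        have hIco : Finset.Ico N D ⊆ Finset.range D := fun k hk =>
          Finset.mem_range.2 (Finset.mem_Ico.1 hk).2
        refine mul_le_mul' (measure_mono ?_) ?_
        · exact iUnion₂_mono' fun k hk => ⟨k, (Finset.mem_Ico.1 hk).1, le_rfl⟩
        · calc _ ≤ ∑ k ∈ Finset.Ico N D, ∑ l ∈ Finset.range D, ∑' q, ∑' r, μ (A k q ∩ A l r) :=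
                Finset.sum_le_sum fun k _ => Finset.sum_le_sum_of_subset hIco
            _ ≤ _ := Finset.sum_le_sum_of_subset hIco

end ChungErdos

theorem measure_limsup_atTop_eq_iInf {X : Type*} [MeasurableSpace X] {μ : Measure X}
    [IsFiniteMeasure μ] {s : ℕ → Set X} (hs : ∀ n, MeasurableSet (s n)) :
    μ (limsup s atTop) = ⨅ n, μ (⋃ k ≥ n, s k) := by
  rw [limsup_eq_iInf_iSup_of_nat]
  exact Antitone.measure_iInter
    (fun m n hmn => iUnion₂_mono' fun k hk => ⟨k, hmn.trans hk, le_rfl⟩)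
    (fun n => (MeasurableSet.biUnion (to_countable _) fun k _ => hs k).nullMeasurableSet)
    ⟨0, measure_ne_top _ _⟩

theorem Set.limsup_iUnion_subset_setOf_infinite {X ι : Type*} (A : ℕ → ι → Set X) :
    limsup (fun k => ⋃ q, A k q) atTop ⊆ {x | {p : ℕ × ι | x ∈ A p.1 p.2}.Infinite} := by
  intro x hx
  rw [mem_limsup_iff_frequently_mem, Nat.frequently_atTop_iff_infinite] at hx
  refine Set.Infinite.of_image Prod.fst (hx.mono fun k hk => ?_)
  obtain ⟨q, hq⟩ := mem_iUnion.1 hk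
  exact ⟨(k, q), hq, rfl⟩

/-- Doubly-indexed quasi-independence-on-average Borel–Cantelli: if each row sum
`∑_q μ(A d q)` is finite, the total sum diverges, and for infinitely many `D` the
quasi-independence bound holds with constant `C`, then the set of points belonging to
infinitely many of the `A d q` has measure at least `1/C`. -/
theorem quasi_independent_double_borel_cantelli {X : Type*} [MeasurableSpace X]
    (μ : Measure X) [IsProbabilityMeasure μ]
    (A : ℕ → ℕ → Set X) (hA : ∀ d q, MeasurableSet (A d q))
    (hrow : ∀ d : ℕ, ∑' q : ℕ, μ (A d q) < ⊤)
    (hdiv : ∑' d : ℕ, ∑' q : ℕ, μ (A d q) = ⊤) (C : ℝ≥0∞)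
    (hC : ∃ᶠ D in atTop,
      ∑ k ∈ Finset.range D, ∑ l ∈ Finset.range D, ∑' q : ℕ, ∑' r : ℕ, μ (A k q ∩ A l r)
        ≤ C * (∑ d ∈ Finset.range D, ∑' q : ℕ, μ (A d q)) ^ 2) :
    1 / C ≤ μ {x | {p : ℕ × ℕ | x ∈ A p.1 p.2}.Infinite} := by
  set T : ℕ → ℝ≥0∞ := fun D => ∑ d ∈ Finset.range D, ∑' q, μ (A d q)
  have hT : Tendsto T atTop (𝓝 ∞) := hdiv ▸ ENNReal.tendsto_nat_tsum _
  have hT_ne_top : ∀ D, T D ≠ ∞ := fun D => ENNReal.sum_ne_top.2 fun d _ => (hrow d).ne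
  have htail : ∀ N, 1 / C ≤ μ (⋃ k ≥ N, ⋃ q, A k q) := fun N =>
    ENNReal.div_le_of_le_mul <| ENNReal.one_le_of_frequently_tsub_sq_le_mul_sq hT hT_ne_top
      (hT_ne_top N) <| (hC.and_eventually (eventually_ge_atTop N)).mono fun D ⟨hCD, hND⟩ =>
        calc (T D - T N) ^ 2 ≤ μ (⋃ k ≥ N, ⋃ q, A k q) * (C * T D ^ 2) :=
              (sq_tsub_sum_range_le_measure_iUnion_ge_mul hA hND).trans (by gcongr)
          _ = μ (⋃ k ≥ N, ⋃ q, A k q) * C * T D ^ 2 := (mul_assoc _ _ _).symm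
  calc 1 / C ≤ μ (limsup (fun k => ⋃ q, A k q) atTop) := by
        rw [measure_limsup_atTop_eq_iInf fun k => MeasurableSet.iUnion (hA k)]
        exact le_iInf htail
    _ ≤ _ := measure_mono (limsup_iUnion_subset_setOf_infinite A)
end

section
/- Fix m ≥ 1. For every ball W ⊂ 𝕋^m there exists Q ≥ 1 such that for all integers q ≥ Q, all radii r ≥ 0, and all v ∈ ℝ^m, Leb(E_{1,m}(q,r,v) ∩ W) ≥ (1/2) Leb(E_{1,m}(q,r,v)) Leb(W), where E_{1,m}(q,r,v) = {x ∈ 𝕋^m : qx ∈ B(v,r) mod 1} is the set of points x in the torus for which qx lies in the ball of radius r centered at v modulo ℤ^m. -/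
open MeasureTheory
open scoped ENNReal

/-- The set `E_{1,m}(q,r,v) = {x ∈ 𝕋^m : q·x ∈ B(v,r) mod ℤ^m}`: points of the torus whose
`q`-th multiple lies within distance `r` of `v` modulo `ℤ^m` (max-norm distance). -/
def gridSet (m q : ℕ) (r : ℝ) (v : Fin m → ℝ) : Set (Fin m → AddCircle (1:ℝ)) :=
  {x | dist (fun j => (q : ℤ) • x j) (fun j => ((v j : ℝ) : AddCircle (1:ℝ))) ≤ r}

/-!
The grid set and the ball are both products of one-dimensional sets, so everything reduces to the
circle. There the slice `{y : q y ∈ B(v, r)}` is invariant under translation by `1/q`, hence each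
of the `⌈qℓ - 1⌉` whole cells of length `1/q` that fit inside a ball of length `ℓ` carries the
fraction `1/q` of its measure, and the slice meets the ball in at least `(ℓ - 1/q)` times its
measure. Over `m` coordinates this gives the factor `(ℓ - 1/q)^m`, which exceeds `ℓ^m / 2` for
large `q`.
-/

open Set Filter Metric Topology

theorem Function.Periodic.volume_inter_Ioc_add_nat_mul {S : Set ℝ} {p : ℝ}
    (hper : Function.Periodic (· ∈ S) p) (hS : MeasurableSet S) (hp : 0 ≤ p) (a : ℝ) (n : ℕ) :
    volume (S ∩ Ioc a (a + n * p)) = n * volume (S ∩ Ioc a (a + p)) := by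
  induction n with
  | zero => simp
  | succ n ih =>
    have hshift : volume (S ∩ Ioc (a + n * p) (a + n * p + p)) = volume (S ∩ Ioc a (a + p)) := by
      have hS_shift : (· + n * p) ⁻¹' S = S := Set.ext fun x => Iff.of_eq (hper.nat_mul n x)
      rw [← measure_preimage_add_right _ (n * p), preimage_inter, hS_shift,
        preimage_add_const_Ioc, add_sub_cancel_right, add_right_comm, add_sub_cancel_right]
    have hsplit :
        Ioc a (a + (n + 1 : ℕ) * p) = Ioc a (a + n * p) ∪ Ioc (a + n * p) (a + n * p + p) := by
      have hnp : 0 ≤ n * p := mul_nonneg n.cast_nonneg hp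
      rw [Ioc_union_Ioc_eq_Ioc (by linarith) (by linarith)]
      push_cast; ring_nf
    rw [hsplit, inter_union_distrib_left, measure_union
      ((Ioc_disjoint_Ioc_of_le le_rfl).mono inter_subset_right inter_subset_right)
      (hS.inter measurableSet_Ioc), ih, hshift]
    push_cast
    ring

namespace AddCircle

variable {T : ℝ}

theorem natCast_zsmul_add_coe_div {q : ℕ} (hq : q ≠ 0) (x : AddCircle T) :
    (q : ℤ) • (x + ((T / q : ℝ) : AddCircle T)) = (q : ℤ) • x := by
  rw [smul_add, ← coe_zsmul, zsmul_eq_mul, Int.cast_natCast,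
    mul_div_cancel₀ _ (by exact_mod_cast hq), coe_period, add_zero]

theorem dist_coe_le_abs_sub (x y : ℝ) : dist (x : AddCircle T) (y : AddCircle T) ≤ |x - y| := by
  rw [dist_eq_norm, ← coe_sub, ← Real.norm_eq_abs]
  exact QuotientAddGroup.norm_mk_le_norm

variable [Fact (0 < T)]

theorem volume_ball_le (x : AddCircle T) (ε : ℝ) :
    volume (ball x ε) ≤ ENNReal.ofReal (min T (2 * ε)) :=
  (measure_mono ball_subset_closedBall).trans (volume_closedBall T ε).le

theorem ofReal_div_mul_volume_le_volume_inter_ball {S : Set (AddCircle T)} (hS : MeasurableSet S)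
    {q : ℕ} (hq : q ≠ 0) (hper : Function.Periodic (· ∈ S) ((T / q : ℝ) : AddCircle T))
    (c : AddCircle T) {ρ : ℝ} {k : ℕ} (hkq : k ≤ q) (hkρ : k * (T / q) < 2 * ρ) :
    ENNReal.ofReal (k / q) * volume S ≤ volume (S ∩ ball c ρ) := by
  have hT := (Fact.out : 0 < T)
  have hq_pos : (0 : ℝ) < q := by positivity
  obtain ⟨c, rfl⟩ := QuotientAddGroup.mk_surjective c
  set S' : Set ℝ := QuotientAddGroup.mk ⁻¹' S
  have hper' : Function.Periodic (· ∈ S') (T / q) := fun x => hper x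
  have hcell :=
    hper'.volume_inter_Ioc_add_nat_mul (hS.preimage AddCircle.measurable_mk') (by positivity)
  set a := c - k * (T / q) / 2 with ha
  have hvol : volume S = q * volume (S' ∩ Ioc a (a + T / q)) := by
    rw [add_projection_respects_measure T a hS, ← hcell, mul_div_cancel₀ _ hq_pos.ne']
  have hsub : S' ∩ Ioc a (a + k * (T / q)) ⊆
      QuotientAddGroup.mk ⁻¹' (S ∩ ball (c : AddCircle T) ρ) ∩ Ioc a (a + T) := by
    have hkT : k * (T / q) ≤ T := by
      rw [mul_div_left_comm]
      exact mul_le_of_le_one_right hT.le ((div_le_one hq_pos).mpr (by exact_mod_cast hkq))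
    rintro x ⟨hxS, hxa, hxb⟩
    refine ⟨⟨hxS, (dist_coe_le_abs_sub x c).trans_lt ?_⟩, hxa, by linarith⟩
    rw [abs_sub_lt_iff]
    constructor <;> linarith [ha]
  calc ENNReal.ofReal (k / q) * volume S
      = k * volume (S' ∩ Ioc a (a + T / q)) := by
        rw [hvol, ENNReal.ofReal_div_of_pos hq_pos, ENNReal.ofReal_natCast, ENNReal.ofReal_natCast,
          ← mul_assoc, ENNReal.div_mul_cancel (by exact_mod_cast hq) (ENNReal.natCast_ne_top q)]
    _ = volume (S' ∩ Ioc a (a + k * (T / q))) := (hcell a k).symm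
    _ ≤ volume (S ∩ ball (c : AddCircle T) ρ) := by
        rw [add_projection_respects_measure T a (hS.inter measurableSet_ball)]
        exact measure_mono hsub

theorem ofReal_sub_inv_mul_volume_le_volume_inter_ball {S : Set (AddCircle T)}
    (hS : MeasurableSet S) {q : ℕ} (hq : q ≠ 0)
    (hper : Function.Periodic (· ∈ S) ((T / q : ℝ) : AddCircle T)) (c : AddCircle T) (ρ : ℝ) :
    ENNReal.ofReal (min T (2 * ρ) / T - (q : ℝ)⁻¹) * volume S ≤ volume (S ∩ ball c ρ) := by
  have hT := (Fact.out : 0 < T)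
  have hq_pos : (0 : ℝ) < q := by positivity
  set L := min T (2 * ρ) / T
  rcases le_or_gt (L - (q : ℝ)⁻¹) 0 with hL | hL
  · simp [ENNReal.ofReal_of_nonpos hL]
  have hqL : 0 ≤ q * L - 1 := by
    have := mul_lt_mul_of_pos_left hL hq_pos
    rw [mul_sub, mul_inv_cancel₀ hq_pos.ne'] at this
    linarith
  set k := ⌈q * L - 1⌉₊
  have hk_lt : k / q < L := by
    rw [div_lt_iff₀' hq_pos]
    linarith [Nat.ceil_lt_add_one hqL]
  have hL_le : L ≤ 1 := (div_le_one hT).mpr (min_le_left _ _)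
  refine le_trans ?_ (ofReal_div_mul_volume_le_volume_inter_ball hS hq hper c (k := k) ?_ ?_)
  · gcongr
    rw [le_div_iff₀ hq_pos, sub_mul, inv_mul_cancel₀ hq_pos.ne', mul_comm]
    exact Nat.le_ceil _
  · have : (k : ℝ) / q < 1 := hk_lt.trans_le hL_le
    rw [div_lt_one hq_pos] at this
    exact_mod_cast this.le
  · calc (k : ℝ) * (T / q) = k / q * T := by ring
      _ < L * T := by gcongr
      _ ≤ 2 * ρ := by rw [div_mul_cancel₀ _ hT.ne']; exact min_le_right _ _

end AddCircle

theorem eventually_ofReal_pow_div_two_le {L : ℝ} (hL : 0 < L) (m : ℕ) :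
    ∀ᶠ q : ℕ in atTop, ENNReal.ofReal L ^ m / 2 ≤ ENNReal.ofReal (L - (q : ℝ)⁻¹) ^ m := by
  have hlim : Tendsto (fun q : ℕ => ENNReal.ofReal (L - (q : ℝ)⁻¹) ^ m) atTop
      (𝓝 (ENNReal.ofReal L ^ m)) := by
    have := (tendsto_const_nhds (x := L)).sub (tendsto_inv_atTop_nhds_zero_nat (𝕜 := ℝ))
    rw [sub_zero] at this
    exact ENNReal.Tendsto.pow ((ENNReal.continuous_ofReal.tendsto L).comp this)
  refine (hlim.eventually_const_lt (ENNReal.half_lt_self ?_ ?_)).mono fun _ => le_of_lt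
  · simp [hL]
  · simp

def circleGridSet (q : ℕ) (r v : ℝ) : Set (AddCircle (1 : ℝ)) :=
  (fun y => (q : ℤ) • y) ⁻¹' closedBall (v : AddCircle (1 : ℝ)) r

theorem measurableSet_circleGridSet (q : ℕ) (r v : ℝ) : MeasurableSet (circleGridSet q r v) :=
  measurableSet_closedBall.preimage (continuous_zsmul (q : ℤ)).measurable

theorem circleGridSet_periodic {q : ℕ} (hq : q ≠ 0) (r v : ℝ) :
    Function.Periodic (· ∈ circleGridSet q r v) ((1 / q : ℝ) : AddCircle (1 : ℝ)) := fun x => by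
  simp only [circleGridSet, mem_preimage, AddCircle.natCast_zsmul_add_coe_div hq]

theorem gridSet_eq_pi (m q : ℕ) {r : ℝ} (hr : 0 ≤ r) (v : Fin m → ℝ) :
    gridSet m q r v = univ.pi fun j => circleGridSet q r (v j) := by
  ext x
  simp only [gridSet, circleGridSet, mem_ofPred_eq, mem_univ_pi, mem_preimage, mem_closedBall]
  exact dist_pi_le_iff hr

theorem gridSet_uniform_general (m : ℕ) (c : Fin m → AddCircle (1:ℝ)) (ρ : ℝ) :
    ∃ Q : ℕ, 1 ≤ Q ∧ ∀ q : ℕ, Q ≤ q → ∀ r : ℝ, 0 ≤ r → ∀ v : Fin m → ℝ,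
      volume (gridSet m q r v) * volume (Metric.ball c ρ) / 2
        ≤ volume (gridSet m q r v ∩ Metric.ball c ρ) := by
  rcases le_or_gt ρ 0 with hρ | hρ
  · exact ⟨1, le_rfl, fun q _ r _ v => by simp [ball_eq_empty.mpr hρ]⟩
  set L := min 1 (2 * ρ)
  obtain ⟨Q, hQ⟩ := eventually_atTop.mp
    (eventually_ofReal_pow_div_two_le (lt_min one_pos (by linarith) : 0 < L) m)
  refine ⟨max Q 1, le_max_right _ _, fun q hq r hr v => ?_⟩
  have hq0 : q ≠ 0 := by omega
  set S := fun j => circleGridSet q r (v j)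
  rw [gridSet_eq_pi m q hr, ball_pi c hρ, ← pi_inter_distrib, volume_pi_pi, volume_pi_pi,
    volume_pi_pi, mul_div_assoc]
  calc (∏ j, volume (S j)) * ((∏ j, volume (ball (c j) ρ)) / 2)
      ≤ (∏ j, volume (S j)) * (ENNReal.ofReal L ^ m / 2) := by
        gcongr
        refine (Finset.prod_le_pow_card _ _ _ fun j _ =>
          AddCircle.volume_ball_le (c j) ρ).trans_eq ?_
        rw [Finset.card_univ, Fintype.card_fin]
    _ ≤ (∏ j, volume (S j)) * ENNReal.ofReal (L - (q : ℝ)⁻¹) ^ m := by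
        gcongr
        exact hQ q (le_of_max_le_left hq)
    _ = ∏ j, ENNReal.ofReal (L - (q : ℝ)⁻¹) * volume (S j) := by
        rw [Finset.prod_mul_distrib, Finset.prod_const, Finset.card_univ, Fintype.card_fin,
          mul_comm]
    _ ≤ ∏ j, volume (S j ∩ ball (c j) ρ) := by
        gcongr with j
        simpa only [div_one] using AddCircle.ofReal_sub_inv_mul_volume_le_volume_inter_ball
          (measurableSet_circleGridSet q r (v j)) hq0 (circleGridSet_periodic hq0 r (v j)) (c j) ρ

/-- **Uniformity of grid sets.** Fix `m ≥ 1`. For every ball `W ⊆ 𝕋^m` there exists `Q ≥ 1`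
such that for all `q ≥ Q`, all radii `r ≥ 0`, and all `v ∈ ℝ^m`,
`Leb(E_{1,m}(q,r,v) ∩ W) ≥ (1/2)·Leb(E_{1,m}(q,r,v))·Leb(W)`. -/
theorem gridSet_uniform (m : ℕ) (hm : 1 ≤ m) (c : Fin m → AddCircle (1:ℝ)) (ρ : ℝ) :
    ∃ Q : ℕ, 1 ≤ Q ∧ ∀ q : ℕ, Q ≤ q → ∀ r : ℝ, 0 ≤ r → ∀ v : Fin m → ℝ,
      volume (gridSet m q r v) * volume (Metric.ball c ρ) / 2
        ≤ volume (gridSet m q r v ∩ Metric.ball c ρ) :=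
  gridSet_uniform_general m c ρ
end

section
/- Let m, n ≥ 1 and for each q ∈ ℤ₊^n let P(gcd(q)) ⊂ (ℝ/gcd(q)ℤ)^m be a finite set, with P(q) its lift to ℝ^m. If q₁, q₂ ∈ ℤ₊^n are linearly independent over ℝ and each set A_{1,m}^P(gcd(q_i), r_i) ⊂ 𝕋^m (i=1,2) is a union of pairwise disjoint balls, then Leb(A_{n,m}^P(q₁,r₁) ∩ A_{n,m}^P(q₂,r₂)) = Leb(A_{n,m}^P(q₁,r₁)) · Leb(A_{n,m}^P(q₂,r₂)); i.e., the two sets are independent. -/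
/-!
Write `d = gcd q` and `c = q / d`, so that `c` is primitive. Since `liftSet` is invariant under
`dℤ^m` and, by Bezout, the integer translates of `Y` move `cY` through all of `ℤ^m`, the condition
defining `A^P(q, r)` only depends on `cX ∈ 𝕋^m`: the set is the preimage of `A^P_{1,m}(d, r)` under
the continuous homomorphism `X ↦ cX`. For linearly independent `q₁, q₂` the joint map
`X ↦ (c₁X, c₂X) : 𝕋^{nm} → 𝕋^m × 𝕋^m` is surjective, so it pushes Haar measure to Haar measure,
which is the product of the two marginal Haar measures; independence follows.
-/

open MeasureTheory
open scoped ENNReal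

/-- The lift to `ℝ^m` of the finite set `P d ⊆ (ℝ/dℤ)^m` (given by representatives). -/
def liftSet (m : ℕ) (P : ℕ → Finset (Fin m → ℝ)) (d : ℕ) : Set (Fin m → ℝ) :=
  {x | ∃ p ∈ P d, ∃ k : Fin m → ℤ, x = p + (d : ℝ) • fun j => ((k j : ℤ) : ℝ)}

/-- `A_{n,m}^P(q,r) ⊆ 𝕋^{nm}`: matrices `X` with `qX ∈ B(0,r) + P(q)` (max-norm ball). -/
def approxSet (m n : ℕ) (P : ℕ → Finset (Fin m → ℝ)) (q : Fin n → ℕ) (r : ℝ) :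
    Set (Fin n → Fin m → AddCircle (1:ℝ)) :=
  {X | ∃ Y : Fin n → Fin m → ℝ, (∀ i j, ((Y i j : ℝ) : AddCircle (1:ℝ)) = X i j) ∧
    ∃ z ∈ liftSet m P (Finset.univ.gcd q), ‖(fun j => ∑ i, (q i : ℝ) * Y i j) - z‖ ≤ r}

open Function

local notation "𝕋" => AddCircle (1 : ℝ)

instance : IsProbabilityMeasure (volume : Measure 𝕋) := ⟨by simp⟩

theorem Matrix.mulVec_surjective_of_linearIndependent_row {ι α F : Type*} [Finite ι] [Fintype α]
    [Field F] {M : Matrix ι α F} (h : LinearIndependent F M.row) : Surjective M.mulVec := by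
  intro y
  have hy : y ∈ Submodule.span F (Set.range (flip M.row)) := by
    rw [span_flip_eq_top_iff_linearIndependent.2 h]; trivial
  obtain ⟨x, hx⟩ := Submodule.mem_span_range_iff_exists_fun F |>.1 hy
  refine ⟨x, funext fun k => ?_⟩
  simpa [Matrix.mulVec, dotProduct, Finset.sum_apply, flip, mul_comm] using congrFun hx k

lemma Finset.natCast_gcd {ι : Type*} (s : Finset ι) (f : ι → ℕ) :
    ((s.gcd f : ℕ) : ℤ) = s.gcd fun i => (f i : ℤ) := by
  classical
  induction s using Finset.induction with
  | empty => simp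
  | insert a s ha ih =>
    simp only [Finset.gcd_insert, ← ih, ← Int.coe_gcd, Int.gcd_natCast_natCast]
    rfl

section HaarIndependence

variable {G H₁ H₂ : Type*}
  [AddGroup G] [TopologicalSpace G] [ContinuousAdd G] [MeasurableSpace G] [BorelSpace G]
  [AddGroup H₁] [TopologicalSpace H₁] [IsTopologicalAddGroup H₁] [LocallyCompactSpace H₁]
  [MeasurableSpace H₁] [BorelSpace H₁]
  [AddGroup H₂] [TopologicalSpace H₂] [IsTopologicalAddGroup H₂] [LocallyCompactSpace H₂]
  [MeasurableSpace H₂] [BorelSpace H₂] [SecondCountableTopologyEither H₁ H₂]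

theorem measure_preimage_inter_preimage_eq_mul (μ : Measure G) [μ.IsAddHaarMeasure]
    [IsProbabilityMeasure μ] {f₁ : G →+ H₁} {f₂ : G →+ H₂} (hf₁ : Continuous f₁)
    (hf₂ : Continuous f₂) (hf : Surjective (f₁.prod f₂)) {S₁ : Set H₁} {S₂ : Set H₂}
    (hS₁ : MeasurableSet S₁) (hS₂ : MeasurableSet S₂) :
    μ (f₁ ⁻¹' S₁ ∩ f₂ ⁻¹' S₂) = μ (f₁ ⁻¹' S₁) * μ (f₂ ⁻¹' S₂) := by
  have hsurj₁ : Surjective f₁ := fun y ↦ (hf (y, 0)).imp fun _ ↦ congrArg Prod.fst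
  have hsurj₂ : Surjective f₂ := fun y ↦ (hf (0, y)).imp fun _ ↦ congrArg Prod.snd
  have hf₁₂ : Continuous (f₁.prod f₂) := hf₁.prodMk hf₂
  have := μ.isAddHaarMeasure_map_of_isFiniteMeasure f₁ hf₁ hsurj₁
  have := μ.isAddHaarMeasure_map_of_isFiniteMeasure f₂ hf₂ hsurj₂
  have := μ.isAddHaarMeasure_map_of_isFiniteMeasure _ hf₁₂ hf
  have := Measure.isProbabilityMeasure_map (μ := μ) hf₁.aemeasurable
  have := Measure.isProbabilityMeasure_map (μ := μ) hf₂.aemeasurable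
  have := Measure.isProbabilityMeasure_map (μ := μ) hf₁₂.aemeasurable
  -- both sides are Haar probability measures on `H₁ × H₂`
  have hmap : μ.map (f₁.prod f₂) = (μ.map f₁).prod (μ.map f₂) :=
    Measure.isAddHaarMeasure_eq_of_isProbabilityMeasure _ _
  calc μ (f₁ ⁻¹' S₁ ∩ f₂ ⁻¹' S₂) = μ.map (f₁.prod f₂) (S₁ ×ˢ S₂) :=
        (Measure.map_apply hf₁₂.measurable (hS₁.prod hS₂)).symm
    _ = μ.map f₁ S₁ * μ.map f₂ S₂ := by rw [hmap, Measure.prod_prod]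
    _ = μ (f₁ ⁻¹' S₁) * μ (f₂ ⁻¹' S₂) := by
      rw [Measure.map_apply hf₁.measurable hS₁, Measure.map_apply hf₂.measurable hS₂]

end HaarIndependence

section Torus

variable {ι κ A : Type*} [Fintype ι] [AddCommMonoid A]

def rowComb (c : ι → ℕ) : (ι → κ → A) →+ (κ → A) where
  toFun X := ∑ i, c i • X i
  map_zero' := by simp
  map_add' X Y := by simp [Finset.sum_add_distrib]

lemma rowComb_apply (c : ι → ℕ) (X : ι → κ → A) (j : κ) :
    rowComb c X j = ∑ i, c i • X i j := by
  simp [rowComb, Finset.sum_apply]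

lemma continuous_rowComb [TopologicalSpace A] [ContinuousAdd A] (c : ι → ℕ) :
    Continuous (rowComb c : (ι → κ → A) → κ → A) :=
  continuous_finsetSum _ fun i _ ↦ (continuous_apply i).const_smul (c i)

variable {p : ℝ}

lemma rowComb_coe (c : ι → ℕ) (Y : ι → κ → ℝ) (j : κ) :
    rowComb c (fun i k ↦ (Y i k : AddCircle p)) j =
      ((∑ i, (c i : ℝ) * Y i j : ℝ) : AddCircle p) := by
  simp [rowComb_apply, ← nsmul_eq_mul]

theorem rowComb_prod_surjective {c₁ c₂ : ι → ℕ}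
    (h : LinearIndependent ℝ ![fun i ↦ (c₁ i : ℝ), fun i ↦ (c₂ i : ℝ)]) :
    Surjective ((rowComb c₁).prod (rowComb c₂) : (ι → κ → AddCircle p) →+ _) := by
  rintro ⟨u, v⟩
  obtain ⟨s, rfl⟩ := (QuotientAddGroup.mk_surjective (s := AddSubgroup.zmultiples p)).comp_left u
  obtain ⟨t, rfl⟩ := (QuotientAddGroup.mk_surjective (s := AddSubgroup.zmultiples p)).comp_left v
  choose x hx using fun j ↦ Matrix.mulVec_surjective_of_linearIndependent_row h ![s j, t j]
  refine ⟨fun i j ↦ (x j i : AddCircle p), Prod.ext (funext fun j ↦ ?_) (funext fun j ↦ ?_)⟩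
  · simpa [rowComb_coe, Matrix.mulVec, dotProduct] using
      congrArg ((↑) : ℝ → AddCircle p) (congrFun (hx j) 0)
  · simpa [rowComb_coe, Matrix.mulVec, dotProduct] using
      congrArg ((↑) : ℝ → AddCircle p) (congrFun (hx j) 1)

theorem exists_lift_sum_mul_eq {c : ι → ℕ} (hc : Finset.univ.gcd c = 1)
    (X : ι → κ → AddCircle p) {s : κ → ℝ} (hs : ∀ j, (s j : AddCircle p) = rowComb c X j) :
    ∃ Y : ι → κ → ℝ, (∀ i j, (Y i j : AddCircle p) = X i j) ∧
      ∀ j, ∑ i, (c i : ℝ) * Y i j = s j := by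
  choose Y₀ hY₀ using fun i j ↦
    QuotientAddGroup.mk_surjective (s := AddSubgroup.zmultiples p) (X i j)
  obtain rfl : X = fun i j ↦ (Y₀ i j : AddCircle p) := funext₂ fun i j ↦ (hY₀ i j).symm
  have hdiff (j : κ) : ∃ t : ℤ, t • p = s j - ∑ i, (c i : ℝ) * Y₀ i j := by
    rw [← AddSubgroup.mem_zmultiples_iff, ← QuotientAddGroup.eq_iff_sub_mem, ← rowComb_coe, hs j]
  choose t ht using hdiff
  obtain ⟨e, he⟩ := Finset.univ.gcd_eq_sum_mul fun i ↦ (c i : ℤ)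
  rw [← Finset.natCast_gcd, hc, Nat.cast_one] at he
  refine ⟨fun i j ↦ Y₀ i j + (e i * t j) • p, fun i j ↦ ?_, fun j ↦ ?_⟩
  · rw [AddCircle.coe_add, AddCircle.coe_zsmul, AddCircle.coe_period, smul_zero, add_zero]
  · calc ∑ i, (c i : ℝ) * (Y₀ i j + (e i * t j) • p)
        = ∑ i, (c i : ℝ) * Y₀ i j + (((∑ i, (c i : ℤ) * e i : ℤ) : ℝ)) * (t j • p) := by
          push_cast
          simp only [mul_add, Finset.sum_add_distrib, Finset.sum_mul, zsmul_eq_mul]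
          congr 1; refine Finset.sum_congr rfl fun i _ ↦ by push_cast; ring
      _ = s j := by rw [← he, ht j]; push_cast; ring

end Torus

section PrimPart

variable {ι : Type*} [Fintype ι]

def primPart (q : ι → ℕ) : ι → ℕ := fun i ↦ q i / Finset.univ.gcd q

lemma gcd_mul_primPart (q : ι → ℕ) (i : ι) : Finset.univ.gcd q * primPart q i = q i :=
  Nat.mul_div_cancel' (Finset.gcd_dvd (Finset.mem_univ i))

lemma gcd_ne_zero_of_ne_zero {q : ι → ℕ} (hq : q ≠ 0) : Finset.univ.gcd q ≠ 0 :=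
  mt Finset.gcd_eq_zero_iff.1 fun h ↦ hq (funext fun i ↦ h i (Finset.mem_univ i))

lemma gcd_primPart {q : ι → ℕ} (hq : q ≠ 0) : Finset.univ.gcd (primPart q) = 1 := by
  obtain ⟨i, hi⟩ := Function.ne_iff.1 hq
  exact Finset.gcd_div_eq_one (Finset.mem_univ i) hi

lemma linearIndependent_primPart {q₁ q₂ : ι → ℕ} (hq₁ : q₁ ≠ 0) (hq₂ : q₂ ≠ 0)
    (h : LinearIndependent ℝ ![fun i ↦ (q₁ i : ℝ), fun i ↦ (q₂ i : ℝ)]) :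
    LinearIndependent ℝ ![fun i ↦ (primPart q₁ i : ℝ), fun i ↦ (primPart q₂ i : ℝ)] := by
  have hd {q : ι → ℕ} (hq : q ≠ 0) : IsUnit ((Finset.univ.gcd q : ℕ) : ℝ) :=
    isUnit_iff_ne_zero.2 (Nat.cast_ne_zero.2 (gcd_ne_zero_of_ne_zero hq))
  have hsmul (q : ι → ℕ) :
      ((Finset.univ.gcd q : ℕ) : ℝ) • (fun i ↦ (primPart q i : ℝ)) = fun i ↦ (q i : ℝ) :=
    funext fun i ↦ by simp [← gcd_mul_primPart q i]
  rwa [← LinearIndependent.pair_smul_smul_iff (hd hq₁) (hd hq₂), hsmul, hsmul]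

end PrimPart

/-- `A_{1,m}^P(d, r)`: the union of the balls of radius `r / d` about the points `z / d`,
`z ∈ liftSet m P d`. -/
def approxSet₁ (m : ℕ) (P : ℕ → Finset (Fin m → ℝ)) (d : ℕ) (r : ℝ) : Set (Fin m → 𝕋) :=
  {u | ∃ s : Fin m → ℝ, (∀ j, (s j : 𝕋) = u j) ∧
    ∃ z ∈ liftSet m P d, ‖(d : ℝ) • s - z‖ ≤ r}

theorem approxSet_eq_preimage {m n : ℕ} (P : ℕ → Finset (Fin m → ℝ)) {q : Fin n → ℕ}
    (hq : q ≠ 0) (r : ℝ) :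
    approxSet m n P q r = rowComb (primPart q) ⁻¹' approxSet₁ m P (Finset.univ.gcd q) r := by
  have hsum (Y : Fin n → Fin m → ℝ) : (fun j ↦ ∑ i, (q i : ℝ) * Y i j)
      = ((Finset.univ.gcd q : ℕ) : ℝ) • fun j ↦ ∑ i, (primPart q i : ℝ) * Y i j := by
    ext j
    simp [Finset.mul_sum, ← mul_assoc, ← gcd_mul_primPart q]
  ext X
  constructor
  · rintro ⟨Y, hY, z, hz, hYz⟩
    obtain rfl := funext₂ hY
    exact ⟨_, fun j ↦ (rowComb_coe _ _ j).symm, z, hz, by rwa [← hsum]⟩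
  · rintro ⟨s, hs, z, hz, hsz⟩
    obtain ⟨Y, hY, hYs⟩ := exists_lift_sum_mul_eq (gcd_primPart hq) X hs
    refine ⟨Y, hY, z, hz, ?_⟩
    rwa [hsum, funext hYs]

lemma countable_liftSet (m : ℕ) (P : ℕ → Finset (Fin m → ℝ)) (d : ℕ) :
    (liftSet m P d).Countable := by
  have : liftSet m P d = ⋃ p ∈ (P d : Set (Fin m → ℝ)),
      Set.range fun k : Fin m → ℤ ↦ p + (d : ℝ) • fun j ↦ (k j : ℝ) := by
    ext x; simp [liftSet, eq_comm]
  rw [this]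
  exact (P d).countable_toSet.biUnion fun p _ ↦ Set.countable_range _

theorem measurableSet_approxSet₁ (m : ℕ) (P : ℕ → Finset (Fin m → ℝ)) {d : ℕ} (hd : d ≠ 0)
    (r : ℝ) : MeasurableSet (approxSet₁ m P d r) := by
  have hunion : approxSet₁ m P d r = ⋃ z ∈ liftSet m P d,
      (fun s j ↦ (s j : 𝕋)) '' ((fun s ↦ (d : ℝ) • s) ⁻¹' Metric.closedBall z r) := by
    ext u
    simp only [approxSet₁, Set.mem_iUnion, Set.mem_image, Set.mem_preimage, Metric.mem_closedBall,
      dist_eq_norm, funext_iff]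
    grind
  rw [hunion]
  refine .biUnion (countable_liftSet m P d) fun z _ ↦ IsCompact.measurableSet ?_
  refine IsCompact.image ?_
    (continuous_pi fun j ↦ (AddCircle.continuous_mk' 1).comp (continuous_apply j))
  exact (Homeomorph.smulOfNeZero (d : ℝ) (Nat.cast_ne_zero.2 hd)).isCompact_preimage.2
    (isCompact_closedBall z r)

theorem approxSet_independent_general (m n : ℕ)
    (P : ℕ → Finset (Fin m → ℝ))
    (q₁ q₂ : Fin n → ℕ) (r₁ r₂ : ℝ)
    (hli : LinearIndependent ℝ
      ![(fun i => ((q₁ i : ℕ) : ℝ)), (fun i => ((q₂ i : ℕ) : ℝ))]) :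
    volume (approxSet m n P q₁ r₁ ∩ approxSet m n P q₂ r₂)
      = volume (approxSet m n P q₁ r₁) * volume (approxSet m n P q₂ r₂) := by
  have hq₁ : q₁ ≠ 0 := fun h ↦ hli.ne_zero 0 (by ext; simp [h])
  have hq₂ : q₂ ≠ 0 := fun h ↦ hli.ne_zero 1 (by ext; simp [h])
  have : (volume : Measure (Fin n → Fin m → 𝕋)).IsAddHaarMeasure := Measure.pi.isAddHaarMeasure _
  rw [approxSet_eq_preimage P hq₁, approxSet_eq_preimage P hq₂]
  exact measure_preimage_inter_preimage_eq_mul volume (continuous_rowComb _) (continuous_rowComb _)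
    (rowComb_prod_surjective (linearIndependent_primPart hq₁ hq₂ hli))
    (measurableSet_approxSet₁ m P (gcd_ne_zero_of_ne_zero hq₁) r₁)
    (measurableSet_approxSet₁ m P (gcd_ne_zero_of_ne_zero hq₂) r₂)

/-- **Independence for linearly independent directions.** If `q₁, q₂` are linearly
independent over `ℝ` and each one-dimensional set `A_{1,m}^P(gcd qᵢ, rᵢ)` is a union of
pairwise disjoint balls (the lifted points of `P(gcd qᵢ)` being `> 2rᵢ` separated), then
the sets `A_{n,m}^P(q₁,r₁)` and `A_{n,m}^P(q₂,r₂)` are independent. -/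
theorem approxSet_independent (m n : ℕ) (hm : 1 ≤ m) (hn : 1 ≤ n)
    (P : ℕ → Finset (Fin m → ℝ))
    (hrep : ∀ d : ℕ, 1 ≤ d → ∀ p ∈ P d, ∀ j, (0:ℝ) ≤ p j ∧ p j < d)
    (q₁ q₂ : Fin n → ℕ) (r₁ r₂ : ℝ) (hr₁ : 0 ≤ r₁) (hr₂ : 0 ≤ r₂)
    (hli : LinearIndependent ℝ
      ![(fun i => ((q₁ i : ℕ) : ℝ)), (fun i => ((q₂ i : ℕ) : ℝ))])
    (hsep₁ : ∀ x ∈ liftSet m P (Finset.univ.gcd q₁), ∀ y ∈ liftSet m P (Finset.univ.gcd q₁),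
      x ≠ y → 2 * r₁ < ‖x - y‖)
    (hsep₂ : ∀ x ∈ liftSet m P (Finset.univ.gcd q₂), ∀ y ∈ liftSet m P (Finset.univ.gcd q₂),
      x ≠ y → 2 * r₂ < ‖x - y‖) :
    volume (approxSet m n P q₁ r₁ ∩ approxSet m n P q₂ r₂)
      = volume (approxSet m n P q₁ r₁) * volume (approxSet m n P q₂ r₂) :=
  approxSet_independent_general m n P q₁ q₂ r₁ r₂ hli
end
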